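/- With Γ^B_i := ∑_β π_β (∂_i π_β) + ∑_β π_β Γ_i π_β the Berry-type connection coefficients, let F^B_{ij} := ∂_i Γ^B_j − ∂_j Γ^B_i + [Γ^B_i, Γ^B_j] and F_{ij} := ∂_i Γ_j − ∂_j Γ_i + [Γ_i, Γ_j] denote the curvatures of the Berry-type connection and of the original connection ∇. Then for all coordinate directions i, j, pointwise on U: F^B_{ij} = ∑_α π_α F_{ij} π_α + ∑_α π_α ( (∇_i π_α)(∇_j π_α) − (∇_j π_α)(∇_i π_α) ) π_α. (This is the paper's formula F^B = ∑_α π_α F^o π_α + ∑_α π_α (∇π_α) ∧ (∇π_α) for the curvature of the Berry connection.) -/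

import Mathlib

open Matrix

attribute [local instance]
  Matrix.linftyOpNormedAddCommGroup Matrix.linftyOpNormedSpace

/-- Partial derivative `∂_i X` of a matrix-valued function on
`EuclideanSpace ℝ (Fin m)` in the `i`-th coordinate direction. -/
noncomputable def mpd {m n : ℕ} (i : Fin m)
    (X : EuclideanSpace ℝ (Fin m) → Matrix (Fin n) (Fin n) ℂ)
    (x : EuclideanSpace ℝ (Fin m)) : Matrix (Fin n) (Fin n) ℂ :=
  fderiv ℝ X x (EuclideanSpace.single i 1)

/-- Covariant derivative `∇_i X = ∂_i X + [Γ_i, X]` induced on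
endomorphism-valued functions by the connection with coefficients `Γ`. -/
noncomputable def cd {m n : ℕ}
    (Γ : Fin m → EuclideanSpace ℝ (Fin m) → Matrix (Fin n) (Fin n) ℂ)
    (i : Fin m)
    (X : EuclideanSpace ℝ (Fin m) → Matrix (Fin n) (Fin n) ℂ)
    (x : EuclideanSpace ℝ (Fin m)) : Matrix (Fin n) (Fin n) ℂ :=
  mpd i X x + (Γ i x * X x - X x * Γ i x)

attribute [local instance] Matrix.linftyOpNormedRing Matrix.linftyOpNormedAlgebra

/-! ### Purely algebraic lemmas -/

section AlgebraLemmas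

variable {A : Type*} [Ring A] {r : ℕ}

lemma sum_L1 (P Q X : Fin r → A)
    (h1 : ∀ α β, P α * P β = if α = β then P α else 0)
    (hsum : ∑ α, P α = 1)
    (hQ : ∀ α β, Q α * P β + P α * Q β = if α = β then Q α else 0) :
    (∑ β, P β * Q β) * (∑ β, P β * X β)
      = ∑ β, P β * (Q β * X β) - ∑ β, Q β * X β := by
  rw [Fintype.sum_mul_sum]
  have key : ∀ β γ : Fin r, (P β * Q β) * (P γ * X γ)
      = (if γ = β then P β * (Q β * X β) else 0) - P β * (Q γ * X γ) := by
    intro β γ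
    rcases eq_or_ne β γ with h | h
    · subst h
      have h2 : Q β * P β = Q β - P β * Q β := by
        have h3 := hQ β β
        rw [if_pos rfl] at h3
        exact eq_sub_of_add_eq h3
      rw [if_pos rfl]
      calc (P β * Q β) * (P β * X β) = P β * (Q β * P β) * X β := by noncomm_ring
        _ = P β * (Q β - P β * Q β) * X β := by rw [h2]
        _ = P β * (Q β * X β) - (P β * P β) * (Q β * X β) := by noncomm_ring
        _ = P β * (Q β * X β) - P β * (Q β * X β) := by rw [h1 β β, if_pos rfl]
    · have h2 : Q β * P γ = -(P β * Q γ) := by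
        have h3 := hQ β γ
        rw [if_neg h] at h3
        exact eq_neg_of_add_eq_zero_left h3
      rw [if_neg (Ne.symm h)]
      calc (P β * Q β) * (P γ * X γ) = P β * (Q β * P γ) * X γ := by noncomm_ring
        _ = P β * (-(P β * Q γ)) * X γ := by rw [h2]
        _ = -((P β * P β) * (Q γ * X γ)) := by noncomm_ring
        _ = 0 - P β * (Q γ * X γ) := by rw [h1 β β, if_pos rfl, zero_sub]
  calc ∑ β, ∑ γ, (P β * Q β) * (P γ * X γ)
      = ∑ β, ∑ γ, ((if γ = β then P β * (Q β * X β) else 0) - P β * (Q γ * X γ)) :=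
        Finset.sum_congr rfl fun β _ => Finset.sum_congr rfl fun γ _ => key β γ
    _ = ∑ β, (P β * (Q β * X β) - P β * ∑ γ, Q γ * X γ) := by
        refine Finset.sum_congr rfl fun β _ => ?_
        rw [Finset.sum_sub_distrib, Finset.sum_ite_eq' Finset.univ β
          (fun _ => P β * (Q β * X β)), if_pos (Finset.mem_univ β), ← Finset.mul_sum]
    _ = ∑ β, P β * (Q β * X β) - (∑ β, P β) * (∑ γ, Q γ * X γ) := by
        rw [Finset.sum_sub_distrib, ← Finset.sum_mul]
    _ = ∑ β, P β * (Q β * X β) - ∑ β, Q β * X β := by rw [hsum, one_mul]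

lemma sum_L2 (P L Y : Fin r → A)
    (h1 : ∀ α β, P α * P β = if α = β then P α else 0) :
    (∑ β, L β * P β) * (∑ β, P β * Y β) = ∑ β, L β * (P β * Y β) := by
  rw [Fintype.sum_mul_sum]
  have key : ∀ β γ : Fin r, (L β * P β) * (P γ * Y γ)
      = if γ = β then L β * (P β * Y β) else 0 := by
    intro β γ
    rcases eq_or_ne γ β with h | h
    · subst h
      rw [if_pos rfl]
      calc (L γ * P γ) * (P γ * Y γ) = L γ * ((P γ * P γ) * Y γ) := by noncomm_ring
        _ = L γ * (P γ * Y γ) := by rw [h1 γ γ, if_pos rfl]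
    · rw [if_neg h]
      calc (L β * P β) * (P γ * Y γ) = L β * ((P β * P γ) * Y γ) := by noncomm_ring
        _ = 0 := by rw [h1 β γ, if_neg (Ne.symm h)]; simp
  calc ∑ β, ∑ γ, (L β * P β) * (P γ * Y γ)
      = ∑ β, ∑ γ, (if γ = β then L β * (P β * Y β) else 0) :=
        Finset.sum_congr rfl fun β _ => Finset.sum_congr rfl fun γ _ => key β γ
    _ = ∑ β, L β * (P β * Y β) := by
        refine Finset.sum_congr rfl fun β _ => ?_
        rw [Finset.sum_ite_eq' Finset.univ β (fun _ => L β * (P β * Y β)),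
          if_pos (Finset.mem_univ β)]

lemma berry_algebra (P Qi Qj Rij : Fin r → A) (Gi Gj Di Dj : A)
    (h1 : ∀ α β, P α * P β = if α = β then P α else 0)
    (hsum : ∑ α, P α = 1)
    (hQi : ∀ α β, Qi α * P β + P α * Qi β = if α = β then Qi α else 0)
    (hQj : ∀ α β, Qj α * P β + P α * Qj β = if α = β then Qj α else 0) :
    (∑ β, (P β * Rij β + Qi β * Qj β)
      + ∑ β, ((P β * Gj) * Qi β + (P β * Di + Qi β * Gj) * P β))
    - (∑ β, (P β * Rij β + Qj β * Qi β)
      + ∑ β, ((P β * Gi) * Qj β + (P β * Dj + Qj β * Gi) * P β))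
    + ((∑ β, P β * Qi β + ∑ β, P β * Gi * P β)
        * (∑ β, P β * Qj β + ∑ β, P β * Gj * P β)
      - (∑ β, P β * Qj β + ∑ β, P β * Gj * P β)
        * (∑ β, P β * Qi β + ∑ β, P β * Gi * P β))
    = ∑ α, P α * (Di - Dj + (Gi * Gj - Gj * Gi)) * P α
    + ∑ α, P α * ((Qi α + (Gi * P α - P α * Gi)) * (Qj α + (Gj * P α - P α * Gj))
        - (Qj α + (Gj * P α - P α * Gj)) * (Qi α + (Gi * P α - P α * Gi))) * P α := by
  have hBi : (∑ β, P β * Gi * P β) = ∑ β, (P β * Gi) * P β :=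
    Finset.sum_congr rfl fun β _ => rfl
  have hBi' : (∑ β, P β * Gi * P β) = ∑ β, P β * (Gi * P β) :=
    Finset.sum_congr rfl fun β _ => by rw [mul_assoc]
  have hBj' : (∑ β, P β * Gj * P β) = ∑ β, P β * (Gj * P β) :=
    Finset.sum_congr rfl fun β _ => by rw [mul_assoc]
  have expand : ∀ a b c d : A, (a + b) * (c + d) - (c + d) * (a + b)
      = (a * c + a * d + b * c + b * d) - (c * a + c * b + d * a + d * b) := by
    intro a b c d; noncomm_ring
  rw [expand]
  have eAiAj := sum_L1 P Qi Qj h1 hsum hQi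
  have eAjAi := sum_L1 P Qj Qi h1 hsum hQj
  have eAiBj : (∑ β, P β * Qi β) * (∑ β, P β * Gj * P β)
      = ∑ β, P β * (Qi β * (Gj * P β)) - ∑ β, Qi β * (Gj * P β) := by
    rw [hBj']; exact sum_L1 P Qi (fun β => Gj * P β) h1 hsum hQi
  have eAjBi : (∑ β, P β * Qj β) * (∑ β, P β * Gi * P β)
      = ∑ β, P β * (Qj β * (Gi * P β)) - ∑ β, Qj β * (Gi * P β) := by
    rw [hBi']; exact sum_L1 P Qj (fun β => Gi * P β) h1 hsum hQj
  have eBiAj : (∑ β, P β * Gi * P β) * (∑ β, P β * Qj β)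
      = ∑ β, (P β * Gi) * (P β * Qj β) := sum_L2 P (fun β => P β * Gi) Qj h1
  have eBjAi : (∑ β, P β * Gj * P β) * (∑ β, P β * Qi β)
      = ∑ β, (P β * Gj) * (P β * Qi β) := sum_L2 P (fun β => P β * Gj) Qi h1
  have eBiBj : (∑ β, P β * Gi * P β) * (∑ β, P β * Gj * P β)
      = ∑ β, (P β * Gi) * (P β * (Gj * P β)) := by
    rw [hBj']; exact sum_L2 P (fun β => P β * Gi) (fun β => Gj * P β) h1
  have eBjBi : (∑ β, P β * Gj * P β) * (∑ β, P β * Gi * P β)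
      = ∑ β, (P β * Gj) * (P β * (Gi * P β)) := by
    rw [hBi']; exact sum_L2 P (fun β => P β * Gj) (fun β => Gi * P β) h1
  rw [eAiAj, eAjAi, eAiBj, eAjBi, eBiAj, eBjAi, eBiBj, eBjBi]
  rw [← sub_eq_zero]
  simp only [← Finset.sum_sub_distrib, ← Finset.sum_add_distrib]
  refine Finset.sum_eq_zero fun β _ => ?_
  have p2 : P β * P β = P β := by simpa using h1 β β
  have r1 : ∀ z : A, P β * (P β * z) = P β * z := fun z => by rw [← mul_assoc, p2]
  have qi1 : P β * Qi β = Qi β - Qi β * P β := by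
    have h := hQi β β
    rw [if_pos rfl] at h
    exact eq_sub_of_add_eq' h
  have qj1 : P β * Qj β = Qj β - Qj β * P β := by
    have h := hQj β β
    rw [if_pos rfl] at h
    exact eq_sub_of_add_eq' h
  have r3 : ∀ z : A, P β * (Qi β * z) = Qi β * z - Qi β * (P β * z) := fun z => by
    rw [← mul_assoc, qi1, sub_mul, mul_assoc]
  have r4 : ∀ z : A, P β * (Qj β * z) = Qj β * z - Qj β * (P β * z) := fun z => by
    rw [← mul_assoc, qj1, sub_mul, mul_assoc]
  simp only [mul_add, add_mul, mul_sub, sub_mul, mul_assoc, r1, p2, r3, qi1, r4, qj1]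
  noncomm_ring

end AlgebraLemmas

/-! ### Analytic lemmas about `mpd` -/

section MpdLemmas

variable {m n : ℕ} {x : EuclideanSpace ℝ (Fin m)}
  {f g : EuclideanSpace ℝ (Fin m) → Matrix (Fin n) (Fin n) ℂ}

lemma mpd_congr (i : Fin m) (h : f =ᶠ[nhds x] g) : mpd i f x = mpd i g x := by
  unfold mpd
  rw [h.fderiv_eq]

lemma mpd_const (i : Fin m) (c : Matrix (Fin n) (Fin n) ℂ) :
    mpd i (fun _ => c) x = 0 := by
  simp [mpd]

lemma mpd_add (i : Fin m) (hf : DifferentiableAt ℝ f x) (hg : DifferentiableAt ℝ g x) :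
    mpd i (fun y => f y + g y) x = mpd i f x + mpd i g x := by
  exact congrArg (fun L => L (EuclideanSpace.single i (1:ℝ))) (fderiv_fun_add hf hg)

lemma mpd_sum {r : ℕ} (i : Fin m)
    (f : Fin r → EuclideanSpace ℝ (Fin m) → Matrix (Fin n) (Fin n) ℂ)
    (hf : ∀ b, DifferentiableAt ℝ (f b) x) :
    mpd i (fun y => ∑ b, f b y) x = ∑ b, mpd i (f b) x := by
  have := congrArg (fun L => L (EuclideanSpace.single i (1:ℝ))) (fderiv_fun_sum (u := Finset.univ) (fun b _ => hf b))
  simp only [ContinuousLinearMap.coe_sum', Finset.sum_apply] at this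
  exact this

lemma mpd_mul (i : Fin m) (hf : DifferentiableAt ℝ f x) (hg : DifferentiableAt ℝ g x) :
    mpd i (fun y => f y * g y) x = f x * mpd i g x + mpd i f x * g x := by
  have := congrArg (fun L => L (EuclideanSpace.single i (1:ℝ))) (fderiv_fun_mul' hf hg)
  simp only [ContinuousLinearMap.add_apply,
    ContinuousLinearMap.smul_apply, ContinuousLinearMap.smulRight_apply, smul_eq_mul] at this
  exact this

lemma differentiableAt_mpd (i : Fin m) (hf : ContDiffAt ℝ (⊤ : ℕ∞) f x) :
    DifferentiableAt ℝ (mpd i f) x := by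
  have h1 : DifferentiableAt ℝ (fderiv ℝ f) x :=
    (hf.fderiv_right (m := 1) (WithTop.coe_le_coe.mpr le_top)).differentiableAt one_ne_zero
  exact ((ContinuousLinearMap.apply ℝ (Matrix (Fin n) (Fin n) ℂ)
    (EuclideanSpace.single i (1:ℝ))).hasFDerivAt.comp x h1.hasFDerivAt).differentiableAt

lemma mpd_comm (hf : ContDiffAt ℝ (⊤ : ℕ∞) f x) (k l : Fin m) :
    mpd k (mpd l f) x = mpd l (mpd k f) x := by
  have h1 : DifferentiableAt ℝ (fderiv ℝ f) x :=
    (hf.fderiv_right (m := 1) (WithTop.coe_le_coe.mpr le_top)).differentiableAt one_ne_zero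
  have key : ∀ (a : Fin m) (v : EuclideanSpace ℝ (Fin m)),
      mpd a (fun y => fderiv ℝ f y v) x
        = fderiv ℝ (fderiv ℝ f) x (EuclideanSpace.single a 1) v := by
    intro a v
    have h2 : HasFDerivAt (fun y => fderiv ℝ f y v)
        ((ContinuousLinearMap.apply ℝ (Matrix (Fin n) (Fin n) ℂ) v).comp
          (fderiv ℝ (fderiv ℝ f) x)) x :=
      ((ContinuousLinearMap.apply ℝ (Matrix (Fin n) (Fin n) ℂ) v).hasFDerivAt).comp x
        h1.hasFDerivAt
    simp only [mpd]
    erw [h2.fderiv]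
    rfl
  have e1 : mpd k (mpd l f) x
      = fderiv ℝ (fderiv ℝ f) x (EuclideanSpace.single k 1) (EuclideanSpace.single l 1) :=
    key k (EuclideanSpace.single l 1)
  have e2 : mpd l (mpd k f) x
      = fderiv ℝ (fderiv ℝ f) x (EuclideanSpace.single l 1) (EuclideanSpace.single k 1) :=
    key l (EuclideanSpace.single k 1)
  rw [e1, e2]
  exact (hf.isSymmSndFDerivAt (by rw [minSmoothness_of_isRCLikeNormedField]; exact WithTop.coe_le_coe.mpr le_top)) _ _

end MpdLemmas

/-- curvature of the Berry-type connection: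
`F^B_{ij} = ∑_α π_α F_{ij} π_α
  + ∑_α π_α ((∇_i π_α)(∇_j π_α) − (∇_j π_α)(∇_i π_α)) π_α`. -/
theorem curvature_of_berry_connection
    (m n r : ℕ) (U : Set (EuclideanSpace ℝ (Fin m))) (hU : IsOpen U)
    (π : Fin r → EuclideanSpace ℝ (Fin m) → Matrix (Fin n) (Fin n) ℂ)
    (hπ : ∀ α, ContDiffOn ℝ (⊤ : ℕ∞) (π α) U)
    (Γ : Fin m → EuclideanSpace ℝ (Fin m) → Matrix (Fin n) (Fin n) ℂ)
    (hΓ : ∀ i, ContDiffOn ℝ (⊤ : ℕ∞) (Γ i) U)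
    (horth : ∀ x ∈ U, ∀ α β, α ≠ β → π α x * π β x = 0)
    (hidem : ∀ x ∈ U, ∀ α, π α x * π α x = π α x)
    (hsum : ∀ x ∈ U, ∑ α, π α x = 1)
    (ΓB : Fin m → EuclideanSpace ℝ (Fin m) → Matrix (Fin n) (Fin n) ℂ)
    (hΓB : ∀ i x, ΓB i x =
      ∑ β, π β x * mpd i (π β) x + ∑ β, π β x * Γ i x * π β x)
    (F FB : Fin m → Fin m → EuclideanSpace ℝ (Fin m) → Matrix (Fin n) (Fin n) ℂ)
    (hF : ∀ i j x, F i j x =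
      mpd i (Γ j) x - mpd j (Γ i) x + (Γ i x * Γ j x - Γ j x * Γ i x))
    (hFB : ∀ i j x, FB i j x =
      mpd i (ΓB j) x - mpd j (ΓB i) x + (ΓB i x * ΓB j x - ΓB j x * ΓB i x)) :
    ∀ x ∈ U, ∀ (i j : Fin m),
      FB i j x = ∑ α, π α x * F i j x * π α x
        + ∑ α, π α x * (cd Γ i (π α) x * cd Γ j (π α) x
            - cd Γ j (π α) x * cd Γ i (π α) x) * π α x := by
  intro x hx i j
  have hmem : U ∈ nhds x := hU.mem_nhds hx
  have hπc : ∀ α, ContDiffAt ℝ (⊤ : ℕ∞) (π α) x := fun α => (hπ α).contDiffAt hmem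
  have hΓc : ∀ k, ContDiffAt ℝ (⊤ : ℕ∞) (Γ k) x := fun k => (hΓ k).contDiffAt hmem
  have hπd : ∀ α, DifferentiableAt ℝ (π α) x := fun α =>
    (hπc α).differentiableAt (by simp)
  have hΓd : ∀ k, DifferentiableAt ℝ (Γ k) x := fun k =>
    (hΓc k).differentiableAt (by simp)
  have hQd : ∀ (k : Fin m) α, DifferentiableAt ℝ (mpd k (π α)) x := fun k α =>
    differentiableAt_mpd k (hπc α)
  -- pointwise projection relations
  have hP : ∀ α β, π α x * π β x = if α = β then π α x else 0 := by
    intro α β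
    rcases eq_or_ne α β with h | h
    · subst h; rw [if_pos rfl]; exact hidem x hx α
    · rw [if_neg h]; exact horth x hx α β h
  have hPsum : ∑ α, π α x = 1 := hsum x hx
  -- differentiated projection relations
  have hQrel : ∀ (k : Fin m) α β,
      mpd k (π α) x * π β x + π α x * mpd k (π β) x
        = if α = β then mpd k (π α) x else 0 := by
    intro k α β
    rcases eq_or_ne α β with h | h
    · subst h
      rw [if_pos rfl]
      have hev : (fun y => π α y * π α y) =ᶠ[nhds x] π α :=
        Filter.eventuallyEq_of_mem hmem (fun y hy => hidem y hy α)
      have h2 := mpd_congr k hev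
      rw [mpd_mul k (hπd α) (hπd α)] at h2
      rw [add_comm]
      exact h2
    · rw [if_neg h]
      have hev : (fun y => π α y * π β y) =ᶠ[nhds x] (fun _ => (0 : Matrix (Fin n) (Fin n) ℂ)) :=
        Filter.eventuallyEq_of_mem hmem (fun y hy => horth y hy α β h)
      have h2 := mpd_congr k hev
      rw [mpd_mul k (hπd α) (hπd β), mpd_const] at h2
      rw [add_comm]
      exact h2
  -- expansion of the partial derivatives of the Berry connection coefficients
  have hexp : ∀ k l : Fin m, mpd k (ΓB l) x
      = ∑ β, (π β x * mpd k (mpd l (π β)) x + mpd k (π β) x * mpd l (π β) x)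
      + ∑ β, ((π β x * Γ l x) * mpd k (π β) x
          + (π β x * mpd k (Γ l) x + mpd k (π β) x * Γ l x) * π β x) := by
    intro k l
    have hfun : ΓB l = fun y => (∑ β, π β y * mpd l (π β) y) + ∑ β, π β y * Γ l y * π β y :=
      funext fun y => hΓB l y
    have d1 : DifferentiableAt ℝ (fun y => ∑ β, π β y * mpd l (π β) y) x :=
      DifferentiableAt.fun_sum fun β _ => (hπd β).mul (hQd l β)
    have d2 : DifferentiableAt ℝ (fun y => ∑ β, π β y * Γ l y * π β y) x :=
      DifferentiableAt.fun_sum fun β _ => ((hπd β).mul (hΓd l)).mul (hπd β)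
    rw [hfun, mpd_add k d1 d2,
      mpd_sum k (fun β y => π β y * mpd l (π β) y) (fun β => (hπd β).mul (hQd l β)),
      mpd_sum k (fun β y => π β y * Γ l y * π β y)
        (fun β => ((hπd β).mul (hΓd l)).mul (hπd β))]
    congr 1
    · exact Finset.sum_congr rfl fun β _ => mpd_mul k (hπd β) (hQd l β)
    · refine Finset.sum_congr rfl fun β _ => ?_
      rw [mpd_mul k ((hπd β).fun_mul (hΓd l)) (hπd β), mpd_mul k (hπd β) (hΓd l)]
  have hsymm : ∑ β, (π β x * mpd j (mpd i (π β)) x + mpd j (π β) x * mpd i (π β) x)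
      = ∑ β, (π β x * mpd i (mpd j (π β)) x + mpd j (π β) x * mpd i (π β) x) :=
    Finset.sum_congr rfl fun β _ => by rw [mpd_comm (hπc β) j i]
  rw [hFB i j x, hexp i j, hexp j i, hsymm, hΓB i x, hΓB j x, hF i j x]
  simp only [cd]
  exact berry_algebra (fun α => π α x) (fun α => mpd i (π α) x) (fun α => mpd j (π α) x)
    (fun β => mpd i (mpd j (π β)) x) (Γ i x) (Γ j x) (mpd i (Γ j) x) (mpd j (Γ i) x)
    hP hPsum (hQrel i) (hQrel j)
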